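/- arXiv:2510.04583 — 3 statements merged into one kernel-verified Lean document; each statement's English description precedes it below -/
import Mathlib

section
/- Let d ≥ 1, μ, y ∈ ℝ^d, γ > 0, and let Σ be a symmetric positive definite d×d real matrix. Then (1/2) ∫_{ℝ^d} ∫_{ℝ^d} exp(−‖x−x'‖²/γ²) φ_d(x; μ, Σ) φ_d(x'; μ, Σ) dx dx' − ∫_{ℝ^d} exp(−‖x−y‖²/γ²) φ_d(x; μ, Σ) dx + 1/2 = −det(I + (2/γ²)Σ)^{−1/2} exp(−(1/γ²) (y−μ)ᵀ (I + (2/γ²)Σ)⁻¹ (y−μ)) + (1/2) det(I + (4/γ²)Σ)^{−1/2} + 1/2. -/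
/-!
Everything reduces to Gaussian integrals of exponentiated quadratic forms. Diagonalising a
positive definite `A` by an orthogonal change of variables gives
`∫ exp (-xᵀ A x) = √(π ^ n / det A)`, and completing the square adds a linear term. Writing the
kernel as `exp (-(x - y)ᵀ C (x - y))` with `C = γ⁻² I`, the expectation of the kernel under
`N(μ, S)` is `det (I + 2 S C) ^ (-1/2) · exp (-(y - μ)ᵀ C (I + 2 S C)⁻¹ (y - μ))`. As a function
of `y` this is again of the same shape, now with `C = γ⁻² (I + 2γ⁻² S)⁻¹`, so integrating once more
against `N(μ, S)` gives the double integral; since `I + 2γ⁻² S` commutes with `S`, the two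
determinants combine to `det (I + 4γ⁻² S)`.
-/

open MeasureTheory Matrix Real

/-- Density of the multivariate normal distribution `N(μ, S)` on `ℝ^d`. -/
noncomputable def mvnPdf {d : ℕ} (μ : Fin d → ℝ) (S : Matrix (Fin d) (Fin d) ℝ)
    (x : Fin d → ℝ) : ℝ :=
  (Real.sqrt ((2 * Real.pi) ^ d * S.det))⁻¹ *
    Real.exp (-(1 / 2) * ((x - μ) ⬝ᵥ (S⁻¹ *ᵥ (x - μ))))

section QuadraticForm

variable {ι R : Type*} [Fintype ι] [CommRing R]

theorem Matrix.mulVec_dotProduct_mulVec (A Q : Matrix ι ι R) (u : ι → R) :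
    (Q *ᵥ u) ⬝ᵥ A *ᵥ (Q *ᵥ u) = u ⬝ᵥ (Qᵀ * A * Q) *ᵥ u := by
  rw [dotProduct_mulVec, vecMul_mulVec, ← mulVec_mulVec, ← dotProduct_mulVec]

theorem Matrix.IsSymm.dotProduct_mulVec_comm {A : Matrix ι ι R} (hA : A.IsSymm) (x y : ι → R) :
    x ⬝ᵥ A *ᵥ y = y ⬝ᵥ A *ᵥ x := by
  simpa only [hA.eq] using dotProduct_transpose_mulVec A x y

theorem Matrix.IsSymm.sub_dotProduct_mulVec_sub {A : Matrix ι ι R} (hA : A.IsSymm)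
    (x c : ι → R) :
    (x - c) ⬝ᵥ A *ᵥ (x - c) = x ⬝ᵥ A *ᵥ x - 2 * ((A *ᵥ c) ⬝ᵥ x) + c ⬝ᵥ A *ᵥ c := by
  rw [mulVec_sub, sub_dotProduct, dotProduct_sub, dotProduct_sub, hA.dotProduct_mulVec_comm c x,
    dotProduct_comm x (A *ᵥ c)]
  ring

theorem dotProduct_diagonal_mulVec [DecidableEq ι] (a u : ι → R) :
    u ⬝ᵥ diagonal a *ᵥ u = ∑ i, a i * u i ^ 2 := by
  simp only [dotProduct, mulVec_diagonal]
  exact Finset.sum_congr rfl fun i _ => by ring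

end QuadraticForm

section GaussianIntegral

variable {ι : Type*} [Fintype ι]

theorem integral_exp_neg_sum_mul_sq (a : ι → ℝ) :
    ∫ x : ι → ℝ, exp (-∑ i, a i * x i ^ 2) = ∏ i, √(π / a i) := by
  simp_rw [← Finset.sum_neg_distrib, exp_sum]
  rw [integral_fintype_prod_volume_eq_prod (f := fun i t => exp (-(a i * t ^ 2)))]
  simp_rw [← neg_mul, integral_gaussian]

variable [DecidableEq ι]

theorem integral_comp_mulVec_of_transpose_mul_self {Q : Matrix ι ι ℝ} (hQ : Qᵀ * Q = 1)
    (f : (ι → ℝ) → ℝ) : ∫ u, f (Q *ᵥ u) = ∫ x, f x := by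
  have hdet : Q.det ^ 2 = 1 := by simpa [sq, det_mul] using congrArg det hQ
  have habs : |Q.det| = 1 :=
    (pow_eq_one_iff_of_nonneg (abs_nonneg Q.det) two_ne_zero).1 (by rw [sq_abs, hdet])
  have hdet₀ : Q.det ≠ 0 := fun h => by simp [h] at hdet
  let e := (Q.toLinearEquiv' (Q.invertibleOfIsUnitDet hdet₀.isUnit)).toContinuousLinearEquiv
  have hmp : MeasurePreserving e volume volume := by
    refine ⟨e.continuous.measurable, ?_⟩
    rw [show ⇑e = ⇑(toLin' Q) from rfl, Measure.map_linearMap_addHaar_pi_eq_smul_addHaar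
      (by rwa [LinearMap.det_toLin']), LinearMap.det_toLin', abs_inv, habs]
    simp
  exact hmp.integral_comp e.toHomeomorph.measurableEmbedding f

theorem Matrix.IsHermitian.transpose_mul_mul_eigenvectorUnitary {A : Matrix ι ι ℝ}
    (hA : A.IsHermitian) :
    (hA.eigenvectorUnitary : Matrix ι ι ℝ)ᵀ * A * hA.eigenvectorUnitary
      = diagonal hA.eigenvalues := by
  simpa [star_eq_conjTranspose] using hA.conjStarAlgAut_star_eigenvectorUnitary

theorem Matrix.PosDef.integral_exp_neg_dotProduct_mulVec {A : Matrix ι ι ℝ} (hA : A.PosDef) :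
    ∫ x : ι → ℝ, exp (-(x ⬝ᵥ A *ᵥ x)) = √(π ^ Fintype.card ι / A.det) := by
  set Q : Matrix ι ι ℝ := ↑hA.isHermitian.eigenvectorUnitary
  have hQ : Qᵀ * Q = 1 := by
    simpa [star_eq_conjTranspose] using
      Unitary.coe_star_mul_self hA.isHermitian.eigenvectorUnitary
  rw [← integral_comp_mulVec_of_transpose_mul_self hQ]
  simp_rw [mulVec_dotProduct_mulVec, Q, hA.isHermitian.transpose_mul_mul_eigenvectorUnitary,
    dotProduct_diagonal_mulVec, integral_exp_neg_sum_mul_sq]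
  rw [← sqrt_prod _ fun i _ => div_nonneg pi_pos.le (hA.eigenvalues_pos i).le,
    Finset.prod_div_distrib, Finset.prod_const, Finset.card_univ,
    hA.isHermitian.det_eq_prod_eigenvalues]
  rfl

theorem Matrix.PosDef.integral_exp_neg_dotProduct_mulVec_add {A : Matrix ι ι ℝ} (hA : A.PosDef)
    (v : ι → ℝ) :
    ∫ x : ι → ℝ, exp (-(x ⬝ᵥ A *ᵥ x) + 2 * (v ⬝ᵥ x))
      = √(π ^ Fintype.card ι / A.det) * exp (v ⬝ᵥ A⁻¹ *ᵥ v) := by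
  have hsymm : A.IsSymm := isHermitian_iff_isSymm.1 hA.isHermitian
  have hv : A *ᵥ (A⁻¹ *ᵥ v) = v := by
    rw [mulVec_mulVec, mul_nonsing_inv _ ((isUnit_iff_isUnit_det A).1 hA.isUnit), one_mulVec]
  have hsq (x : ι → ℝ) : -(x ⬝ᵥ A *ᵥ x) + 2 * (v ⬝ᵥ x)
      = -((x - A⁻¹ *ᵥ v) ⬝ᵥ A *ᵥ (x - A⁻¹ *ᵥ v)) + v ⬝ᵥ A⁻¹ *ᵥ v := by
    rw [hsymm.sub_dotProduct_mulVec_sub, hv, dotProduct_comm _ v]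
    ring
  simp_rw [hsq, exp_add, integral_mul_const]
  rw [integral_sub_right_eq_self (fun x => exp (-(x ⬝ᵥ A *ᵥ x))),
    hA.integral_exp_neg_dotProduct_mulVec]

end GaussianIntegral

theorem mvnPdf_add_right {d : ℕ} (μ : Fin d → ℝ) (S : Matrix (Fin d) (Fin d) ℝ)
    (z : Fin d → ℝ) :
    mvnPdf μ S (z + μ)
      = (√((2 * π) ^ d * S.det))⁻¹ * exp (-(z ⬝ᵥ ((2 : ℝ)⁻¹ • S⁻¹) *ᵥ z)) := by
  rw [mvnPdf, add_sub_cancel_right, smul_mulVec, dotProduct_smul, smul_eq_mul]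
  ring_nf

section CovarianceAlgebra

variable {d : ℕ} {S C : Matrix (Fin d) (Fin d) ℝ}

theorem one_add_two_smul_mul_eq (hS : IsUnit S.det) :
    1 + (2 : ℝ) • (S * C) = (2 : ℝ) • S * (C + (2 : ℝ)⁻¹ • S⁻¹) := by
  rw [smul_mul, mul_add, Matrix.mul_smul, mul_nonsing_inv S hS, smul_add, smul_smul]
  norm_num [add_comm]

theorem mul_inv_one_add_two_smul_mul (hS : IsUnit S.det)
    (hM : IsUnit (C + (2 : ℝ)⁻¹ • S⁻¹).det) :
    C * (1 + (2 : ℝ) • (S * C))⁻¹ = C - C * (C + (2 : ℝ)⁻¹ • S⁻¹)⁻¹ * C := by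
  have h2S : ((2 : ℝ) • S)⁻¹ = C + (2 : ℝ)⁻¹ • S⁻¹ - C := by
    refine inv_eq_left_inv ?_
    rw [add_sub_cancel_left, smul_mul_smul, nonsing_inv_mul S hS]
    norm_num
  rw [one_add_two_smul_mul_eq hS, Matrix.mul_inv_rev, h2S, Matrix.mul_sub, nonsing_inv_mul _ hM,
    Matrix.mul_sub, Matrix.mul_one, Matrix.mul_assoc]

end CovarianceAlgebra

theorem integral_exp_neg_dotProduct_mulVec_mul_mvnPdf {d : ℕ} {S C : Matrix (Fin d) (Fin d) ℝ}
    (hS : S.PosDef) (hC : C.PosSemidef) (μ y : Fin d → ℝ) :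
    ∫ x, exp (-((x - y) ⬝ᵥ C *ᵥ (x - y))) * mvnPdf μ S x
      = (√(1 + (2 : ℝ) • (S * C)).det)⁻¹
          * exp (-((y - μ) ⬝ᵥ (C * (1 + (2 : ℝ) • (S * C))⁻¹) *ᵥ (y - μ))) := by
  set w := y - μ
  set M := C + (2 : ℝ)⁻¹ • S⁻¹
  have hM : M.PosDef := PosDef.posSemidef_add hC (hS.inv.smul (by norm_num))
  have hSunit : IsUnit S.det := (isUnit_iff_isUnit_det S).1 hS.isUnit
  have hCsymm : C.IsSymm := isHermitian_iff_isSymm.1 hC.isHermitian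
  have hexp (z : Fin d → ℝ) : exp (-((z + μ - y) ⬝ᵥ C *ᵥ (z + μ - y))) * mvnPdf μ S (z + μ)
      = (√((2 * π) ^ d * S.det))⁻¹ * exp (-(z ⬝ᵥ M *ᵥ z) + 2 * ((C *ᵥ w) ⬝ᵥ z))
        * exp (-(w ⬝ᵥ C *ᵥ w)) := by
    have hzw : z + μ - y = z - w := by simp only [w]; abel
    rw [hzw, mvnPdf_add_right, hCsymm.sub_dotProduct_mulVec_sub, add_mulVec, dotProduct_add,
      mul_left_comm, mul_assoc, ← exp_add, ← exp_add]
    ring_nf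
  have hnorm : (√((2 * π) ^ d * S.det))⁻¹ * √(π ^ d / M.det)
      = (√(1 + (2 : ℝ) • (S * C)).det)⁻¹ := by
    have := hS.det_pos
    have := hM.det_pos
    have hdet : (1 + (2 : ℝ) • (S * C)).det = 2 ^ d * S.det * M.det := by
      rw [one_add_two_smul_mul_eq hSunit, det_mul, det_smul, Fintype.card_fin]
    rw [← sqrt_inv, ← sqrt_mul (by positivity), ← sqrt_inv, hdet, mul_pow]
    congr 1
    field_simp
  rw [← integral_add_right_eq_self _ μ]
  simp_rw [hexp, integral_mul_const, integral_const_mul,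
    hM.integral_exp_neg_dotProduct_mulVec_add, Fintype.card_fin]
  have hquad : (C *ᵥ w) ⬝ᵥ M⁻¹ *ᵥ (C *ᵥ w) = w ⬝ᵥ (C * M⁻¹ * C) *ᵥ w := by
    rw [mulVec_dotProduct_mulVec, hCsymm.eq]
  rw [← hnorm, mul_inv_one_add_two_smul_mul hSunit ((isUnit_iff_isUnit_det M).1 hM.isUnit),
    sub_mulVec, dotProduct_sub, ← hquad]
  simp only [mul_assoc, ← exp_add]
  congr 3
  ring

theorem integral_gaussianKernel_mul_mvnPdf {d : ℕ} {S : Matrix (Fin d) (Fin d) ℝ}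
    (hS : S.PosDef) (γ : ℝ) (μ y : Fin d → ℝ) :
    ∫ x, exp (-((x - y) ⬝ᵥ (x - y)) / γ ^ 2) * mvnPdf μ S x
      = (√(1 + (2 / γ ^ 2) • S).det)⁻¹
          * exp (-(1 / γ ^ 2) * ((y - μ) ⬝ᵥ (1 + (2 / γ ^ 2) • S)⁻¹ *ᵥ (y - μ))) := by
  have hC : ((γ ^ 2)⁻¹ • (1 : Matrix (Fin d) (Fin d) ℝ)).PosSemidef :=
    PosSemidef.one.smul (by positivity)
  have hkernel (x : Fin d → ℝ) : exp (-((x - y) ⬝ᵥ (x - y)) / γ ^ 2)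
      = exp (-((x - y) ⬝ᵥ ((γ ^ 2)⁻¹ • (1 : Matrix (Fin d) (Fin d) ℝ)) *ᵥ (x - y))) := by
    rw [smul_mulVec, one_mulVec, dotProduct_smul, smul_eq_mul]
    ring_nf
  have hP : 1 + (2 : ℝ) • (S * (γ ^ 2)⁻¹ • (1 : Matrix (Fin d) (Fin d) ℝ))
      = 1 + (2 / γ ^ 2) • S := by
    rw [Matrix.mul_smul, Matrix.mul_one, smul_smul, div_eq_mul_inv]
  simp_rw [hkernel, integral_exp_neg_dotProduct_mulVec_mul_mvnPdf hS hC, hP, smul_mul,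
    Matrix.one_mul, smul_mulVec, dotProduct_smul, smul_eq_mul, one_div, neg_mul]

theorem integral_integral_gaussianKernel_mul_mvnPdf {d : ℕ} {S : Matrix (Fin d) (Fin d) ℝ}
    (hS : S.PosDef) (γ : ℝ) (μ : Fin d → ℝ) :
    ∫ x', ∫ x, exp (-((x - x') ⬝ᵥ (x - x')) / γ ^ 2) * mvnPdf μ S x * mvnPdf μ S x'
      = (√(1 + (4 / γ ^ 2) • S).det)⁻¹ := by
  set M := 1 + (2 / γ ^ 2) • S with hM_def
  have hM : M.PosDef := PosDef.one.add_posSemidef (hS.posSemidef.smul (by positivity))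
  have hC : ((γ ^ 2)⁻¹ • M⁻¹).PosSemidef := hM.inv.posSemidef.smul (by positivity)
  have hquad (x' : Fin d → ℝ) : -(1 / γ ^ 2) * ((x' - μ) ⬝ᵥ M⁻¹ *ᵥ (x' - μ))
      = -((x' - μ) ⬝ᵥ ((γ ^ 2)⁻¹ • M⁻¹) *ᵥ (x' - μ)) := by
    rw [smul_mulVec, dotProduct_smul, smul_eq_mul]
    ring
  have hcomm : Commute M S := (Commute.one_left S).add_left ((Commute.refl S).smul_left _)
  have hdet : M * (1 + (2 : ℝ) • (S * (γ ^ 2)⁻¹ • M⁻¹)) = 1 + (4 / γ ^ 2) • S := by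
    have hMSM : M * S * M⁻¹ = S := by
      rw [hcomm.eq, Matrix.mul_assoc, mul_nonsing_inv _ ((isUnit_iff_isUnit_det M).1 hM.isUnit),
        Matrix.mul_one]
    rw [Matrix.mul_add, Matrix.mul_one]
    simp only [Matrix.mul_smul, ← Matrix.mul_assoc, hMSM, smul_smul, M]
    rw [add_assoc, ← add_smul]
    ring_nf
  simp_rw [integral_mul_const, integral_gaussianKernel_mul_mvnPdf hS, ← hM_def, hquad, mul_assoc,
    integral_const_mul]
  rw [integral_exp_neg_dotProduct_mulVec_mul_mvnPdf hS hC μ μ, sub_self, zero_dotProduct,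
    neg_zero, exp_zero, mul_one, ← mul_inv, ← sqrt_mul hM.det_pos.le, ← det_mul, hdet]

theorem stmt_8_general (d : ℕ) (μ y : Fin d → ℝ) (γ : ℝ)
    (S : Matrix (Fin d) (Fin d) ℝ) (hS : S.PosDef) :
    (1 / 2) * (∫ x' : Fin d → ℝ, ∫ x : Fin d → ℝ,
        Real.exp (-((x - x') ⬝ᵥ (x - x')) / γ ^ 2) * mvnPdf μ S x * mvnPdf μ S x')
      - (∫ x : Fin d → ℝ, Real.exp (-((x - y) ⬝ᵥ (x - y)) / γ ^ 2) * mvnPdf μ S x)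
      + 1 / 2
      = -((Real.sqrt ((1 + (2 / γ ^ 2) • S : Matrix (Fin d) (Fin d) ℝ).det))⁻¹ *
            Real.exp (-(1 / γ ^ 2) *
              ((y - μ) ⬝ᵥ (((1 : Matrix (Fin d) (Fin d) ℝ) + (2 / γ ^ 2) • S)⁻¹ *ᵥ (y - μ)))))
        + (1 / 2) * (Real.sqrt ((1 + (4 / γ ^ 2) • S : Matrix (Fin d) (Fin d) ℝ).det))⁻¹
        + 1 / 2 := by
  rw [integral_integral_gaussianKernel_mul_mvnPdf hS, integral_gaussianKernel_mul_mvnPdf hS]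
  ring

/-- Closed-form value of the Gaussian kernel score `S_k(N(μ,S), y)`.
Here `‖v‖² = v ⬝ᵥ v` is the squared Euclidean norm. -/
theorem stmt_8 (d : ℕ) (hd : 1 ≤ d) (μ y : Fin d → ℝ) (γ : ℝ) (hγ : 0 < γ)
    (S : Matrix (Fin d) (Fin d) ℝ) (hS : S.PosDef) :
    (1 / 2) * (∫ x' : Fin d → ℝ, ∫ x : Fin d → ℝ,
        Real.exp (-((x - x') ⬝ᵥ (x - x')) / γ ^ 2) * mvnPdf μ S x * mvnPdf μ S x')
      - (∫ x : Fin d → ℝ, Real.exp (-((x - y) ⬝ᵥ (x - y)) / γ ^ 2) * mvnPdf μ S x)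
      + 1 / 2
      = -((Real.sqrt ((1 + (2 / γ ^ 2) • S : Matrix (Fin d) (Fin d) ℝ).det))⁻¹ *
            Real.exp (-(1 / γ ^ 2) *
              ((y - μ) ⬝ᵥ (((1 : Matrix (Fin d) (Fin d) ℝ) + (2 / γ ^ 2) • S)⁻¹ *ᵥ (y - μ)))))
        + (1 / 2) * (Real.sqrt ((1 + (4 / γ ^ 2) • S : Matrix (Fin d) (Fin d) ℝ).det))⁻¹
        + 1 / 2 :=
  stmt_8_general d μ y γ S hS
end

section
/- Let a, b ∈ (0,1) and set ᾱ := a·b, β := 1 − a, γ₀ := β√b/(1−ᾱ), γ₁ := (1−b)√a/(1−ᾱ), γ₂ := 1 + (√ᾱ − 1)(√a + √b)/(1−ᾱ). Then for all y, ε, f ∈ ℝ: γ₀ · ( (y − (1 − √ᾱ) f − √(1−ᾱ) ε)/√ᾱ ) + γ₁ y + γ₂ f = (1/√a) · ( y − ((1−a)/√(1−ᾱ)) ε − (1 − √a) f ). -/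
open Real

/-- With `s = √α_t`, `t = √ᾱ_{t-1}`, `r = √(1 - ᾱ_t)` the identity becomes rational; comparing the
coefficients of `y`, `ε` and `f`, each reduces to `r² = 1 - s² t²`. -/
theorem card_posterior_mean_eq {K : Type*} [Field K] {s t r : K} (hs : s ≠ 0) (ht : t ≠ 0)
    (hr : r ^ 2 = 1 - s ^ 2 * t ^ 2) (hr0 : r ≠ 0) (y ε f : K) :
    (1 - s ^ 2) * t / (1 - s ^ 2 * t ^ 2) * ((y - (1 - s * t) * f - r * ε) / (s * t))
        + (1 - t ^ 2) * s / (1 - s ^ 2 * t ^ 2) * y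
        + (1 + (s * t - 1) * (s + t) / (1 - s ^ 2 * t ^ 2)) * f
      = 1 / s * (y - (1 - s ^ 2) / r * ε - (1 - s) * f) := by
  rw [← hr]
  field_simp
  linear_combination (f - y) * hr

/-- The mean of CARD's sampling update `γ₀ ŷ₀ + γ₁ y_t + γ₂ f_φ(x)` equals
`(1/√α_t)(y_t − ((1−α_t)/√(1−ᾱ_t)) ε_θ − (1−√α_t) f_φ(x))`. -/
theorem stmt_12 (a b : ℝ) (ha : a ∈ Set.Ioo (0 : ℝ) 1) (hb : b ∈ Set.Ioo (0 : ℝ) 1)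
    (abar β γ₀ γ₁ γ₂ : ℝ)
    (habar : abar = a * b) (hβ : β = 1 - a)
    (hγ₀ : γ₀ = β * Real.sqrt b / (1 - abar))
    (hγ₁ : γ₁ = (1 - b) * Real.sqrt a / (1 - abar))
    (hγ₂ : γ₂ = 1 + (Real.sqrt abar - 1) * (Real.sqrt a + Real.sqrt b) / (1 - abar)) :
    ∀ y ε f : ℝ,
      γ₀ * ((y - (1 - Real.sqrt abar) * f - Real.sqrt (1 - abar) * ε) / Real.sqrt abar)
          + γ₁ * y + γ₂ * f
        = (1 / Real.sqrt a) *
            (y - ((1 - a) / Real.sqrt (1 - abar)) * ε - (1 - Real.sqrt a) * f) := by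
  intro y ε f
  obtain ⟨ha0, ha1⟩ := ha
  obtain ⟨hb0, hb1⟩ := hb
  have habar_lt : a * b < 1 := by nlinarith
  have hsq_a : √a ^ 2 = a := sq_sqrt ha0.le
  have hsq_b : √b ^ 2 = b := sq_sqrt hb0.le
  have hsq_abar : √(1 - a * b) ^ 2 = 1 - √a ^ 2 * √b ^ 2 := by
    rw [hsq_a, hsq_b, sq_sqrt (by linarith)]
  subst habar hβ hγ₀ hγ₁ hγ₂
  rw [sqrt_mul ha0.le]
  have key := card_posterior_mean_eq (sqrt_pos.2 ha0).ne' (sqrt_pos.2 hb0).ne' hsq_abar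
    (sqrt_pos.2 (by linarith)).ne' y ε f
  rwa [hsq_a, hsq_b] at key
end

section
/- Let d ≥ 1, let a, b ∈ (0,1) with ᾱ := a·b, let σ > 0 satisfy σ² ≤ 1 − b, and let y₀, f ∈ ℝ^d. For y ∈ ℝ^d define m(y) := √b · y₀ + (1 − √b) f + √(1 − b − σ²) · ( y − √ᾱ y₀ − (1 − √ᾱ) f )/√(1−ᾱ). Then for every y' ∈ ℝ^d, ∫_{ℝ^d} φ_d(y'; m(y), σ² I) · φ_d(y; √ᾱ y₀ + (1 − √ᾱ) f, (1−ᾱ) I) dy = φ_d(y'; √b y₀ + (1 − √b) f, (1−b) I). -/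
/-!
Both densities are isotropic, so they factor into products of one-dimensional Gaussian densities
and the integral splits coordinatewise. In one dimension, completing the square factors the joint
density of `t ~ N(μ, τ)` and `w ~ N(c t + m, s)` as the marginal `N(c μ + m, s + c² τ)` of `w`
times the posterior density of `t`, which integrates to one. With `c = √(1 - b - σ²) / √(1 - ᾱ)`
the variance `σ² + c² (1 - ᾱ)` is `1 - b`, and the mean `c μ + m` is `√b y₀ + (1 - √b) f`.
-/

open MeasureTheory Matrix Real

open ProbabilityTheory NNReal

lemma mvnPdf_smul_one {d : ℕ} {v : ℝ} (hv : 0 < v) (μ x : Fin d → ℝ) :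
    mvnPdf μ (v • 1) x = ∏ i, gaussianPDFReal (μ i) v.toNNReal (x i) := by
  have hinv : (v • (1 : Matrix (Fin d) (Fin d) ℝ))⁻¹ = v⁻¹ • 1 :=
    Matrix.inv_eq_right_inv (by simp [hv.ne'])
  have hnorm : ∏ _i : Fin d, √(2 * π * v) = √((2 * π) ^ d * v ^ d) := by
    rw [← Real.sqrt_prod _ fun _ _ => by positivity, Finset.prod_const, Finset.card_univ,
      Fintype.card_fin, mul_pow]
  simp only [mvnPdf, gaussianPDFReal, Real.coe_toNNReal _ hv.le, hinv, det_smul, det_one,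
    Fintype.card_fin, mul_one, smul_mulVec, one_mulVec, Finset.prod_mul_distrib, ← Real.exp_sum,
    ← hnorm, Finset.prod_inv_distrib, dotProduct, Pi.smul_apply, smul_eq_mul]
  congr 2
  rw [Finset.mul_sum]
  refine Finset.sum_congr rfl fun i _ => ?_
  simp only [Pi.sub_apply]
  field_simp

lemma gaussianPDFReal_affine_mul_gaussianPDFReal (c m μ : ℝ) {s τ : ℝ≥0} (hs : s ≠ 0)
    (hτ : τ ≠ 0) (w t : ℝ) :
    gaussianPDFReal (c * t + m) s w * gaussianPDFReal μ τ t =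
      gaussianPDFReal (c * μ + m) (s + .mk (c ^ 2) (sq_nonneg c) * τ) w *
        gaussianPDFReal (μ + c * τ * (w - (c * μ + m)) / (s + c ^ 2 * τ))
          (s * τ / (s + .mk (c ^ 2) (sq_nonneg c) * τ)) t := by
  have hs' : (0 : ℝ) < s := by positivity
  have hτ' : (0 : ℝ) < τ := by positivity
  have hV : (0 : ℝ) < s + c ^ 2 * τ := by positivity
  simp only [gaussianPDFReal, NNReal.coe_add, NNReal.coe_mul, NNReal.coe_div, NNReal.coe_mk]
  have hnorm : (√(2 * π * s))⁻¹ * (√(2 * π * τ))⁻¹ =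
      (√(2 * π * (s + c ^ 2 * τ)))⁻¹ * (√(2 * π * (s * τ / (s + c ^ 2 * τ))))⁻¹ := by
    rw [← mul_inv, ← mul_inv, ← sqrt_mul (by positivity), ← sqrt_mul (by positivity)]
    congr 2
    field_simp
  have hexp : -(w - (c * t + m)) ^ 2 / (2 * s) + -(t - μ) ^ 2 / (2 * τ) =
      -(w - (c * μ + m)) ^ 2 / (2 * (s + c ^ 2 * τ)) +
        -(t - (μ + c * τ * (w - (c * μ + m)) / (s + c ^ 2 * τ))) ^ 2 /
          (2 * (s * τ / (s + c ^ 2 * τ))) := by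
    field_simp
    ring
  calc _ = (√(2 * π * s))⁻¹ * (√(2 * π * τ))⁻¹ *
        rexp (-(w - (c * t + m)) ^ 2 / (2 * s) + -(t - μ) ^ 2 / (2 * τ)) := by
          rw [exp_add]; ring
    _ = _ := by rw [hnorm, hexp, exp_add]; ring

lemma integral_gaussianPDFReal_affine_mul_gaussianPDFReal (c m μ : ℝ) {s τ : ℝ≥0} (hs : s ≠ 0)
    (hτ : τ ≠ 0) (w : ℝ) :
    ∫ t, gaussianPDFReal (c * t + m) s w * gaussianPDFReal μ τ t =
      gaussianPDFReal (c * μ + m) (s + .mk (c ^ 2) (sq_nonneg c) * τ) w := by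
  simp_rw [gaussianPDFReal_affine_mul_gaussianPDFReal c m μ hs hτ w, integral_const_mul]
  rw [integral_gaussianPDFReal_eq_one _ (by positivity), mul_one]

lemma integral_mvnPdf_affine_mul_mvnPdf {d : ℕ} (c : ℝ) (m μ w : Fin d → ℝ) {s τ : ℝ}
    (hs : 0 < s) (hτ : 0 < τ) :
    ∫ y, mvnPdf (c • y + m) (s • 1) w * mvnPdf μ (τ • 1) y =
      mvnPdf (c • μ + m) ((s + c ^ 2 * τ) • 1) w := by
  have hV : 0 < s + c ^ 2 * τ := by positivity
  have hvar :
      (s + c ^ 2 * τ).toNNReal = s.toNNReal + .mk (c ^ 2) (sq_nonneg c) * τ.toNNReal := by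
    ext
    simp [Real.coe_toNNReal _ hV.le, hs.le, hτ.le]
  simp only [mvnPdf_smul_one hs, mvnPdf_smul_one hτ, mvnPdf_smul_one hV, ← Finset.prod_mul_distrib,
    Pi.add_apply, Pi.smul_apply, smul_eq_mul, hvar]
  rw [integral_fintype_prod_volume_eq_prod (fun i t =>
    gaussianPDFReal (c * t + m i) s.toNNReal (w i) * gaussianPDFReal (μ i) τ.toNNReal t)]
  exact Finset.prod_congr rfl fun i _ =>
    integral_gaussianPDFReal_affine_mul_gaussianPDFReal c (m i) (μ i) (by simpa using hs)
      (by simpa using hτ) (w i)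

theorem stmt_14_general (d : ℕ)
    (a b : ℝ) (ha : a ∈ Set.Ioo (0 : ℝ) 1)
    (abar : ℝ) (habar : abar = a * b)
    (σ : ℝ) (hσ : 0 < σ) (hσb : σ ^ 2 ≤ 1 - b)
    (y₀ f : Fin d → ℝ) :
    ∀ y' : Fin d → ℝ,
      (∫ y : Fin d → ℝ,
          mvnPdf (Real.sqrt b • y₀ + (1 - Real.sqrt b) • f
              + (Real.sqrt (1 - b - σ ^ 2) / Real.sqrt (1 - abar)) •
                  (y - Real.sqrt abar • y₀ - (1 - Real.sqrt abar) • f))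
            (σ ^ 2 • (1 : Matrix (Fin d) (Fin d) ℝ)) y'
          * mvnPdf (Real.sqrt abar • y₀ + (1 - Real.sqrt abar) • f)
              ((1 - abar) • (1 : Matrix (Fin d) (Fin d) ℝ)) y)
      = mvnPdf (Real.sqrt b • y₀ + (1 - Real.sqrt b) • f)
          ((1 - b) • (1 : Matrix (Fin d) (Fin d) ℝ)) y' := by
  intro y'
  set c := √(1 - b - σ ^ 2) / √(1 - abar)
  set μ := √abar • y₀ + (1 - √abar) • f
  set m := √b • y₀ + (1 - √b) • f - c • μ
  have hσ2 : 0 < σ ^ 2 := by positivity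
  have hτ : 0 < 1 - abar := by
    rw [habar]
    nlinarith [ha.1, ha.2]
  have hvar : σ ^ 2 + c ^ 2 * (1 - abar) = 1 - b := by
    rw [div_pow, sq_sqrt (by linarith), sq_sqrt hτ.le, div_mul_cancel₀ _ hτ.ne']
    ring
  have hmean (y : Fin d → ℝ) :
      √b • y₀ + (1 - √b) • f + c • (y - √abar • y₀ - (1 - √abar) • f) = c • y + m := by
    simp only [m, μ]
    module
  simp_rw [hmean]
  rw [integral_mvnPdf_affine_mul_mvnPdf c m μ y' hσ2 hτ, hvar, add_sub_cancel]

/-- Inductive step of the CARD marginal property: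
`∫ φ(y'; m(y), σ²I) φ(y; √ᾱ y₀ + (1−√ᾱ)f, (1−ᾱ)I) dy
  = φ(y'; √b y₀ + (1−√b)f, (1−b)I)`,
where `m(y) = √b y₀ + (1−√b)f + √(1−b−σ²)(y − √ᾱ y₀ − (1−√ᾱ)f)/√(1−ᾱ)`. -/
theorem stmt_14 (d : ℕ) (hd : 1 ≤ d)
    (a b : ℝ) (ha : a ∈ Set.Ioo (0 : ℝ) 1) (hb : b ∈ Set.Ioo (0 : ℝ) 1)
    (abar : ℝ) (habar : abar = a * b)
    (σ : ℝ) (hσ : 0 < σ) (hσb : σ ^ 2 ≤ 1 - b)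
    (y₀ f : Fin d → ℝ) :
    ∀ y' : Fin d → ℝ,
      (∫ y : Fin d → ℝ,
          mvnPdf (Real.sqrt b • y₀ + (1 - Real.sqrt b) • f
              + (Real.sqrt (1 - b - σ ^ 2) / Real.sqrt (1 - abar)) •
                  (y - Real.sqrt abar • y₀ - (1 - Real.sqrt abar) • f))
            (σ ^ 2 • (1 : Matrix (Fin d) (Fin d) ℝ)) y'
          * mvnPdf (Real.sqrt abar • y₀ + (1 - Real.sqrt abar) • f)
              ((1 - abar) • (1 : Matrix (Fin d) (Fin d) ℝ)) y)
      = mvnPdf (Real.sqrt b • y₀ + (1 - Real.sqrt b) • f)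
          ((1 - b) • (1 : Matrix (Fin d) (Fin d) ℝ)) y' :=
  stmt_14_general d a b ha abar habar σ hσ hσb y₀ f
end
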